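/- For a real number q > 1 and |u| < q, ∏_{i≥1} (1 + u/(-q)^i)^{-1} = ∑_{j≥0} u^j q^{\binom{j}{2}} / ((q^j - (-1)^j)(q^{j-1} - (-1)^{j-1}) ⋯ (q + 1)). -/

import Mathlib

/-!
With `t = -q⁻¹` and `x = u / q` the identity is Euler's `∏_{i ≥ 0} (1 - x tⁱ) · g(x) = 1`,
where
`g(x) = ∑_j xʲ / ((1 - t)⋯(1 - tʲ))` and `‖t‖, ‖x‖ < 1`. The series satisfies the
functional equation `g(x t) = (1 - x) g(x)`, hence `g(x tⁿ) = ∏_{k < n} (1 - x tᵏ) · g(x)`.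
Its coefficients are uniformly bounded, so `g` is continuous at `0` with `g(0) = 1`, and
letting `n → ∞` gives the identity.
-/

open Finset Filter Topology

section NormedField

variable {𝕜 : Type*} [NormedField 𝕜]

noncomputable def eulerCoeff (t : 𝕜) (j : ℕ) : 𝕜 := (∏ k ∈ Icc 1 j, (1 - t ^ k))⁻¹

noncomputable def eulerSeries (t x : 𝕜) : 𝕜 := ∑' j, x ^ j * eulerCoeff t j

variable {t : 𝕜}

@[simp]
lemma eulerCoeff_zero : eulerCoeff t 0 = 1 := by simp [eulerCoeff]

lemma one_sub_pow_ne_zero (ht : ‖t‖ < 1) {k : ℕ} (hk : k ≠ 0) : 1 - t ^ k ≠ 0 := by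
  refine sub_ne_zero.2 fun h => ?_
  have := congrArg norm h
  rw [norm_one, norm_pow] at this
  exact (pow_lt_one₀ (norm_nonneg t) ht hk).ne this.symm

lemma one_sub_pow_mul_eulerCoeff_succ (ht : ‖t‖ < 1) (j : ℕ) :
    (1 - t ^ (j + 1)) * eulerCoeff t (j + 1) = eulerCoeff t j := by
  rw [eulerCoeff, eulerCoeff, prod_Icc_succ_top (Nat.le_add_left 1 j), mul_inv,
    mul_left_comm, mul_inv_cancel₀ (one_sub_pow_ne_zero ht j.succ_ne_zero), mul_one]

lemma norm_inv_one_sub_pow_le (ht : ‖t‖ < 1) {k : ℕ} (hk : k ≠ 0) :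
    ‖(1 - t ^ k)⁻¹‖ ≤ 1 + ‖t‖ ^ k / (1 - ‖t‖) := by
  have hs : 0 < 1 - ‖t‖ := sub_pos.2 ht
  have hsk : 1 - ‖t‖ ≤ 1 - ‖t‖ ^ k := by
    gcongr; exact pow_le_of_le_one (norm_nonneg t) ht.le hk
  have hlow : 1 - ‖t‖ ^ k ≤ ‖1 - t ^ k‖ := by
    simpa [norm_pow] using norm_sub_norm_le (1 : 𝕜) (t ^ k)
  have hsk₀ : 0 < 1 - ‖t‖ ^ k := hs.trans_le hsk
  calc ‖(1 - t ^ k)⁻¹‖ ≤ (1 - ‖t‖ ^ k)⁻¹ := by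
        rw [norm_inv]; exact inv_anti₀ hsk₀ hlow
    _ = 1 + ‖t‖ ^ k / (1 - ‖t‖ ^ k) := by field_simp; ring
    _ ≤ 1 + ‖t‖ ^ k / (1 - ‖t‖) := by gcongr

lemma norm_eulerCoeff_le (ht : ‖t‖ < 1) (j : ℕ) :
    ‖eulerCoeff t j‖ ≤ Real.exp ((1 - ‖t‖)⁻¹ ^ 2) := by
  have hgeom : ∑ k ∈ Icc 1 j, ‖t‖ ^ k ≤ (1 - ‖t‖)⁻¹ := by
    rw [← tsum_geometric_of_lt_one (norm_nonneg t) ht]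
    exact (summable_geometric_of_lt_one (norm_nonneg t) ht).sum_le_tsum _
      fun k _ => by positivity
  calc ‖eulerCoeff t j‖ = ∏ k ∈ Icc 1 j, ‖(1 - t ^ k)⁻¹‖ := by
        rw [eulerCoeff, ← prod_inv_distrib, norm_prod]
    _ ≤ ∏ k ∈ Icc 1 j, (1 + ‖t‖ ^ k / (1 - ‖t‖)) :=
        prod_le_prod (fun _ _ => norm_nonneg _) fun k hk =>
          norm_inv_one_sub_pow_le ht (by have := (mem_Icc.1 hk).1; omega)
    _ ≤ Real.exp (∑ k ∈ Icc 1 j, ‖t‖ ^ k / (1 - ‖t‖)) :=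
        Real.prod_one_add_le_exp_sum _ fun _ => by positivity
    _ ≤ Real.exp ((1 - ‖t‖)⁻¹ ^ 2) := by
        rw [← sum_div, div_eq_mul_inv, sq]
        gcongr

variable [CompleteSpace 𝕜] {x : 𝕜}

lemma summable_pow_mul_eulerCoeff (ht : ‖t‖ < 1) (hx : ‖x‖ < 1) :
    Summable fun j => x ^ j * eulerCoeff t j :=
  .of_norm_bounded ((summable_geometric_of_lt_one (norm_nonneg x) hx).mul_right _) fun j => by
    rw [norm_mul, norm_pow]
    exact mul_le_mul_of_nonneg_left (norm_eulerCoeff_le ht j) (by positivity)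

lemma eulerSeries_mul_right (ht : ‖t‖ < 1) (hx : ‖x‖ < 1) :
    eulerSeries t (x * t) = (1 - x) * eulerSeries t x := by
  have hxt : ‖x * t‖ < 1 := by
    rw [norm_mul]; exact (mul_le_of_le_one_right (norm_nonneg x) ht.le).trans_lt hx
  have hS := summable_pow_mul_eulerCoeff ht hx
  have hS' := summable_pow_mul_eulerCoeff ht hxt
  suffices eulerSeries t x - eulerSeries t (x * t) = x * eulerSeries t x by
    linear_combination -this
  calc eulerSeries t x - eulerSeries t (x * t)
      = ∑' j, (x ^ j * eulerCoeff t j - (x * t) ^ j * eulerCoeff t j) :=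
        (hS.tsum_sub hS').symm
    _ = ∑' j, (x ^ (j + 1) * eulerCoeff t (j + 1) -
          (x * t) ^ (j + 1) * eulerCoeff t (j + 1)) := by
        rw [(hS.sub hS').tsum_eq_zero_add]; simp
    _ = ∑' j, x * (x ^ j * eulerCoeff t j) := by
        congr 1 with j
        rw [← one_sub_pow_mul_eulerCoeff_succ ht j]
        ring
    _ = x * eulerSeries t x := tsum_mul_left

lemma eulerSeries_mul_pow (ht : ‖t‖ < 1) (hx : ‖x‖ < 1) (n : ℕ) :
    eulerSeries t (x * t ^ n) = (∏ k ∈ range n, (1 - x * t ^ k)) * eulerSeries t x := by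
  induction n with
  | zero => simp
  | succ n ih =>
    have hxtn : ‖x * t ^ n‖ < 1 := by
      rw [norm_mul, norm_pow]
      exact (mul_le_of_le_one_right (norm_nonneg x)
        (pow_le_one₀ (norm_nonneg t) ht.le)).trans_lt hx
    rw [pow_succ, ← mul_assoc, eulerSeries_mul_right ht hxtn, ih, prod_range_succ]
    ring

lemma tendsto_eulerSeries_nhds_zero (ht : ‖t‖ < 1) :
    Tendsto (eulerSeries t) (𝓝 0) (𝓝 1) := by
  have hlim :
      Tendsto (eulerSeries t) (𝓝 0) (𝓝 (∑' j, (0 : 𝕜) ^ j * eulerCoeff t j)) := by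
    refine tendsto_tsum_of_dominated_convergence (f := fun y j => y ^ j * eulerCoeff t j)
      (bound := fun j => (1 / 2) ^ j * Real.exp ((1 - ‖t‖)⁻¹ ^ 2))
      (summable_geometric_two.mul_right _) (fun j => ?_) ?_
    · exact ((continuous_pow j).tendsto 0).mul_const _
    · filter_upwards [Metric.closedBall_mem_nhds (0 : 𝕜) (by norm_num : (0 : ℝ) < 1 / 2)]
        with y hy j
      rw [mem_closedBall_zero_iff] at hy
      rw [norm_mul, norm_pow]
      gcongr
      exact norm_eulerCoeff_le ht j
  rwa [tsum_eq_single 0 fun j hj => by simp [hj], pow_zero, one_mul, eulerCoeff_zero] at hlim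

lemma multipliable_one_sub_mul_pow (ht : ‖t‖ < 1) (x : 𝕜) :
    Multipliable fun i => 1 - x * t ^ i := by
  simp_rw [sub_eq_add_neg]
  refine multipliable_one_add_of_summable ?_
  simpa [norm_mul, norm_pow] using
    (summable_geometric_of_lt_one (norm_nonneg t) ht).mul_left ‖x‖

theorem tprod_one_sub_mul_pow_mul_eulerSeries (ht : ‖t‖ < 1) (hx : ‖x‖ < 1) :
    (∏' i, (1 - x * t ^ i)) * eulerSeries t x = 1 := by
  have hprod := ((multipliable_one_sub_mul_pow ht x).hasProd.tendsto_prod_nat).mul_const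
    (eulerSeries t x)
  have hseries : Tendsto (fun n => eulerSeries t (x * t ^ n)) atTop (𝓝 1) :=
    (tendsto_eulerSeries_nhds_zero ht).comp <| by
      simpa using (tendsto_pow_atTop_nhds_zero_of_norm_lt_one ht).const_mul x
  simp_rw [eulerSeries_mul_pow ht hx] at hseries
  exact tendsto_nhds_unique hprod hseries

end NormedField

lemma prod_Icc_pow_sub_neg_one_pow {K : Type*} [Field K] {q : K} (hq : q ≠ 0) (j : ℕ) :
    ∏ k ∈ Icc 1 j, (q ^ k - (-1) ^ k) =
      q ^ (j.choose 2 + j) * ∏ k ∈ Icc 1 j, (1 - (-q⁻¹) ^ k) := by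
  have hfactor (k : ℕ) : q ^ k - (-1) ^ k = q ^ k * (1 - (-q⁻¹) ^ k) := by
    rw [neg_pow q⁻¹, inv_pow]
    field_simp
  induction j with
  | zero => simp
  | succ j ih =>
    rw [prod_Icc_succ_top (Nat.le_add_left 1 j), prod_Icc_succ_top (Nat.le_add_left 1 j), ih,
      hfactor, Nat.choose_succ_succ', Nat.choose_one_right]
    ring

/-- Unitary analog of Euler's second identity: for `q > 1` and `|u| < q`,
`∏_{i ≥ 1}(1 + u/(-q)^i)^{-1} = ∑_{j ≥ 0} u^j q^{\binom{j}{2}} / ((q^j-(-1)^j)⋯(q+1))`. -/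
theorem euler_identity_unitary_inv (q u : ℝ) (hq : 1 < q) (hu : |u| < q) :
    (∏' i : ℕ, (1 + u / (-q) ^ (i + 1)))⁻¹ =
      ∑' j : ℕ, u ^ j * q ^ (j.choose 2) /
        ∏ k ∈ Finset.Icc 1 j, (q ^ k - (-1 : ℝ) ^ k) := by
  have hq₀ : 0 < q := zero_lt_one.trans hq
  have ht : ‖-q⁻¹‖ < 1 := by
    rw [norm_neg, norm_inv, Real.norm_of_nonneg hq₀.le]
    exact inv_lt_one_of_one_lt₀ hq
  have hx : ‖u / q‖ < 1 := by
    rw [norm_div, Real.norm_eq_abs, Real.norm_of_nonneg hq₀.le]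
    exact (div_lt_one hq₀).2 hu
  have hfactor (i : ℕ) : 1 + u / (-q) ^ (i + 1) = 1 - u / q * (-q⁻¹) ^ i := by
    rw [← inv_neg, inv_pow, pow_succ]
    field_simp
    ring
  have hterm (j : ℕ) : u ^ j * q ^ j.choose 2 / ∏ k ∈ Icc 1 j, (q ^ k - (-1) ^ k) =
      (u / q) ^ j * eulerCoeff (-q⁻¹) j := by
    rw [prod_Icc_pow_sub_neg_one_pow hq₀.ne', eulerCoeff, pow_add, div_pow]
    field_simp
  simp_rw [hfactor, hterm]
  exact inv_eq_of_mul_eq_one_right (tprod_one_sub_mul_pow_mul_eulerSeries ht hx)
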